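/- Let f ∈ Ep_{2l}(R) be any product of elementary symplectic transvections and v ∈ I^{2l}. Then ⟨(fv)_-, (fv)_+⟩ - ⟨v_-, v_+⟩ ∈ Γ, where v_± denote the negative and positive coordinate parts of v. -/
import Mathlib


open scoped BigOperators

/-- Index set {-l,…,-1,1,…,l}: `Sum.inl k` represents -(k+1), `Sum.inr k` represents k+1. -/
abbrev Idx (l : ℕ) := Fin l ⊕ Fin l

namespace Idx
/-- negation of an index -/
def neg {l : ℕ} : Idx l → Idx l := Sum.swap
/-- sign of an index, as a ring element -/
def sgn (R : Type*) [CommRing R] {l : ℕ} : Idx l → R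
  | Sum.inl _ => -1
  | Sum.inr _ => 1
end Idx

variable {R : Type*} [CommRing R] {l : ℕ}

/-- the standard symplectic form ⟨u,v⟩ = Σᵢ sgn(i)·uᵢ·v₋ᵢ -/
def sform (u v : Idx l → R) : R := ∑ i : Idx l, Idx.sgn R i * u i * v (Idx.neg i)

/-- standard basis vector e_i -/
def sbv (R : Type*) [CommRing R] {l : ℕ} (i : Idx l) : Idx l → R := Pi.single i 1

/-- Eichler–Siegel–Dickson transformation T(u,v,a) : w ↦ w + u(⟨v,w⟩+a⟨u,w⟩) + v⟨u,w⟩ -/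
def esd (u v : Idx l → R) (a : R) (w : Idx l → R) : Idx l → R :=
  w + (sform v w + a * sform u w) • u + (sform u w) • v

/-- elementary symplectic transvection: T_{ij}(a) = T(e_i, e_{-j}·a·sgn(-j), 0) for j ≠ -i,
and the long root T_{i,-i}(a) = T(e_i, 0, a). -/
def tvGen (i j : Idx l) (a : R) : (Idx l → R) → (Idx l → R) :=
  if j = Idx.neg i then esd (sbv R i) 0 a
  else esd (sbv R i) ((a * Idx.sgn R (Idx.neg j)) • sbv R (Idx.neg j)) 0

/-- negative part v₋ of a vector -/
def vminus (v : Idx l → R) : Idx l → R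
  | Sum.inl j => v (Sum.inl j)
  | Sum.inr _ => 0

/-- positive part v₊ of a vector -/
def vplus (v : Idx l → R) : Idx l → R
  | Sum.inl _ => 0
  | Sum.inr j => v (Sum.inr j)

/-- the negative indices -l, …, -1 in order -/
def negIdxList (l : ℕ) : List (Idx l) := ((List.finRange l).reverse).map Sum.inl

/-- the positive indices 1, …, l in order -/
def posIdxList (l : ℕ) : List (Idx l) := (List.finRange l).map Sum.inr

/-- all indices -l, …, -1, 1, …, l in order -/
def allIdxList (l : ℕ) : List (Idx l) := negIdxList l ++ posIdxList l

lemma sform_sbv (i : Idx l) (w : Idx l → R) :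
    sform (sbv R i) w = Idx.sgn R i * w (Idx.neg i) := by
  unfold sform sbv
  rw [Finset.sum_eq_single i]
  · simp
  · intro k _ hk; simp [Pi.single_eq_of_ne hk]
  · simp

lemma sform_zero_left (w : Idx l → R) : sform (0 : Idx l → R) w = 0 := by
  simp [sform]

lemma sform_smul_left (c : R) (u w : Idx l → R) :
    sform (c • u) w = c * sform u w := by
  unfold sform
  rw [Finset.mul_sum]
  refine Finset.sum_congr rfl fun x _ => ?_
  simp only [Pi.smul_apply, smul_eq_mul]; ring

lemma Q_eq (w : Idx l → R) :
    sform (vminus w) (vplus w) = ∑ m : Fin l, -(w (Sum.inl m) * w (Sum.inr m)) := by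
  simp [sform, Fintype.sum_sum_type, vminus, vplus, Idx.sgn, Idx.neg]

lemma sgn_negsq (j : Idx l) : (Idx.sgn R (Idx.neg j))^2 = 1 := by
  cases j <;> simp [Idx.sgn, Idx.neg]

lemma long_coord (i : Idx l) (a : R) (w : Idx l → R) (k : Idx l) :
    tvGen i (Idx.neg i) a w k
      = w k + (a * Idx.sgn R i * w (Idx.neg i)) * sbv R i k := by
  rw [tvGen, if_pos rfl]
  simp only [esd, Pi.add_apply, Pi.smul_apply, smul_eq_mul, sform_zero_left, sform_sbv,
    zero_add, Pi.zero_apply, mul_zero, add_zero]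
  ring

lemma short_coord (i j : Idx l) (h : j ≠ Idx.neg i) (a : R) (w : Idx l → R) (k : Idx l) :
    tvGen i j a w k
      = w k + (a * w j) * sbv R i k
          + (Idx.sgn R i * Idx.sgn R (Idx.neg j) * a * w (Idx.neg i)) * sbv R (Idx.neg j) k := by
  rw [tvGen, if_neg h]
  have h1 : sform ((a * Idx.sgn R (Idx.neg j)) • sbv R (Idx.neg j)) w
      = a * Idx.sgn R (Idx.neg j) * (Idx.sgn R (Idx.neg j) * w j) := by
    rw [sform_smul_left, sform_sbv]
    have : Idx.neg (Idx.neg j) = j := Sum.swap_swap j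
    rw [this]
  simp only [esd, h1, sform_sbv, Pi.add_apply, Pi.smul_apply, smul_eq_mul]
  ring_nf
  rw [sgn_negsq]
  ring

lemma idx_neg_ne (i : Idx l) : Idx.neg i ≠ i := by
  cases i <;> simp [Idx.neg]

lemma gen_coords (I : Ideal R) (i j : Idx l) (hij : i ≠ j) (a : R) (w : Idx l → R)
    (hw : ∀ k, w k ∈ I) : ∀ k, tvGen i j a w k ∈ I := by
  intro k
  by_cases hb : j = Idx.neg i
  · subst hb
    rw [long_coord]
    exact I.add_mem (hw k) (I.mul_mem_right _ (I.mul_mem_left _ (hw _)))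
  · rw [short_coord i j hb]
    exact I.add_mem (I.add_mem (hw k) (I.mul_mem_right _ (I.mul_mem_left _ (hw _))))
      (I.mul_mem_right _ (I.mul_mem_left _ (hw _)))

lemma long_defect (I : Ideal R) (Γ : AddSubgroup R)
    (hra : ∀ r : R, ∀ a ∈ I, r * a ^ 2 ∈ Γ)
    (i : Idx l) (a : R) (w : Idx l → R) (hw : ∀ k, w k ∈ I) :
    sform (vminus (tvGen i (Idx.neg i) a w)) (vplus (tvGen i (Idx.neg i) a w))
      - sform (vminus w) (vplus w) ∈ Γ := by
  rw [Q_eq, Q_eq, ← Finset.sum_sub_distrib]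
  refine AddSubgroup.sum_mem Γ fun m _ => ?_
  rw [long_coord, long_coord]
  cases i with
  | inl p =>
    by_cases hm : m = p
    · subst hm
      convert hra a (w (Sum.inr m)) (hw _) using 1
      simp [sbv, Idx.sgn, Idx.neg, Pi.single_apply]
      ring
    · convert Γ.zero_mem using 1
      simp [sbv, Idx.sgn, Idx.neg, Pi.single_apply, hm]
  | inr p =>
    by_cases hm : m = p
    · subst hm
      convert hra (-a) (w (Sum.inl m)) (hw _) using 1
      simp [sbv, Idx.sgn, Idx.neg, Pi.single_apply]
      ring
    · convert Γ.zero_mem using 1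
      simp [sbv, Idx.sgn, Idx.neg, Pi.single_apply, hm]

lemma sum_pair_mem (Γ : AddSubgroup R) {n : ℕ} (d : Fin n → R) (p q : Fin n) (hpq : p ≠ q)
    (hz : ∀ m, m ≠ p → m ≠ q → d m = 0) (hmem : d p + d q ∈ Γ) : ∑ m, d m ∈ Γ := by
  have h1 : ∑ m ∈ ({p, q} : Finset (Fin n)), d m = ∑ m, d m :=
    Finset.sum_subset (Finset.subset_univ _) (fun m _ hm => by
      simp only [Finset.mem_insert, Finset.mem_singleton, not_or] at hm
      exact hz m hm.1 hm.2)
  rw [← h1, Finset.sum_pair hpq]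
  exact hmem

lemma short_defect (I : Ideal R) (Γ : AddSubgroup R)
    (h2 : ∀ a ∈ I, (2 : R) * a ∈ Γ)
    (i j : Idx l) (hij : i ≠ j) (hb : j ≠ Idx.neg i)
    (a : R) (w : Idx l → R) (hw : ∀ k, w k ∈ I) :
    sform (vminus (tvGen i j a w)) (vplus (tvGen i j a w))
      - sform (vminus w) (vplus w) ∈ Γ := by
  rw [Q_eq, Q_eq, ← Finset.sum_sub_distrib]
  cases i with
  | inl p =>
    cases j with
    | inl q =>
      have hpq : p ≠ q := fun h => hij (by rw [h])
      refine sum_pair_mem Γ _ p q hpq (fun m hp hq => ?_) ?_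
      · simp [short_coord _ _ hb, sbv, Pi.single_apply, hp, hq, Idx.neg, Idx.sgn]
      · convert Γ.zero_mem using 1
        simp [short_coord _ _ hb, sbv, Pi.single_apply, hpq, hpq.symm, Idx.neg, Idx.sgn]
        ring
    | inr q =>
      have hpq : p ≠ q := fun h => hb (by simp [Idx.neg, h])
      refine sum_pair_mem Γ _ p q hpq (fun m hp hq => ?_) ?_
      · simp [short_coord _ _ hb, sbv, Pi.single_apply, hp, hq, Idx.neg, Idx.sgn]
      · have hx : -(a * w (Sum.inr p) * w (Sum.inr q)) ∈ I :=
          I.neg_mem (I.mul_mem_right _ (I.mul_mem_left _ (hw _)))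
        convert h2 _ hx using 1
        simp [short_coord _ _ hb, sbv, Pi.single_apply, hpq, hpq.symm, Idx.neg, Idx.sgn]
        ring
  | inr p =>
    cases j with
    | inl q =>
      have hpq : p ≠ q := fun h => hb (by simp [Idx.neg, h])
      refine sum_pair_mem Γ _ p q hpq (fun m hp hq => ?_) ?_
      · simp [short_coord _ _ hb, sbv, Pi.single_apply, hp, hq, Idx.neg, Idx.sgn]
      · have hx : -(a * w (Sum.inl p) * w (Sum.inl q)) ∈ I :=
          I.neg_mem (I.mul_mem_right _ (I.mul_mem_left _ (hw _)))
        convert h2 _ hx using 1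
        simp [short_coord _ _ hb, sbv, Pi.single_apply, hpq, hpq.symm, Idx.neg, Idx.sgn]
        ring
    | inr q =>
      have hpq : p ≠ q := fun h => hij (by rw [h])
      refine sum_pair_mem Γ _ p q hpq (fun m hp hq => ?_) ?_
      · simp [short_coord _ _ hb, sbv, Pi.single_apply, hp, hq, Idx.neg, Idx.sgn]
      · convert Γ.zero_mem using 1
        simp [short_coord _ _ hb, sbv, Pi.single_apply, hpq, hpq.symm, Idx.neg, Idx.sgn]
        ring


/-- for any f ∈ Ep_{2l}(R), i.e. any product of elementary symplectic
transvections (a member of the multiplicative closure of the set of transvections in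
the composition monoid `Function.End`; this set is closed under inversion since
T_{ij}(r)⁻¹ = T_{ij}(-r)), and any v ∈ I^{2l}, one has ⟨(fv)₋,(fv)₊⟩ - ⟨v₋,v₊⟩ ∈ Γ. -/
theorem ep_defect_in_form_parameter (I : Ideal R) (Γ : AddSubgroup R)
    (hsub : ∀ x ∈ Γ, x ∈ I)
    (h2 : ∀ a ∈ I, (2 : R) * a ∈ Γ)
    (hra : ∀ r : R, ∀ a ∈ I, r * a ^ 2 ∈ Γ)
    (har : ∀ α ∈ Γ, ∀ r : R, α * r ^ 2 ∈ Γ)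
    (f : Function.End (Idx l → R))
    (hf : f ∈ Submonoid.closure
      {g : Function.End (Idx l → R) | ∃ (i j : Idx l) (r : R), i ≠ j ∧ g = tvGen i j r})
    (v : Idx l → R) (hv : ∀ k, v k ∈ I) :
    sform (vminus (f v)) (vplus (f v)) - sform (vminus v) (vplus v) ∈ Γ := by
  have key : ∀ f ∈ Submonoid.closure
      {g : Function.End (Idx l → R) | ∃ (i j : Idx l) (r : R), i ≠ j ∧ g = tvGen i j r},
      ∀ w : Idx l → R, (∀ k, w k ∈ I) →
        (∀ k, f w k ∈ I) ∧
          sform (vminus (f w)) (vplus (f w)) - sform (vminus w) (vplus w) ∈ Γ := by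
    intro f hf
    induction hf using Submonoid.closure_induction with
    | mem g hg =>
      obtain ⟨i, j, r, hij, rfl⟩ := hg
      intro w hw
      refine ⟨gen_coords I i j hij r w hw, ?_⟩
      by_cases hb : j = Idx.neg i
      · subst hb; exact long_defect I Γ hra i r w hw
      · exact short_defect I Γ h2 i j hij hb r w hw
    | one =>
      intro w hw
      refine ⟨hw, ?_⟩
      show sform (vminus w) (vplus w) - sform (vminus w) (vplus w) ∈ Γ
      rw [sub_self]; exact Γ.zero_mem
    | mul g g' _ _ hg hg' =>
      intro w hw
      obtain ⟨hc', hd'⟩ := hg' w hw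
      obtain ⟨hc, hd⟩ := hg (g' w) hc'
      refine ⟨hc, ?_⟩
      have : sform (vminus ((g * g') w)) (vplus ((g * g') w))
          - sform (vminus w) (vplus w)
          = (sform (vminus (g (g' w))) (vplus (g (g' w)))
              - sform (vminus (g' w)) (vplus (g' w)))
            + (sform (vminus (g' w)) (vplus (g' w))
              - sform (vminus w) (vplus w)) := by
        show sform (vminus (g (g' w))) (vplus (g (g' w))) - _ = _
        ring
      rw [this]
      exact Γ.add_mem hd hd'
  exact ((key f hf) v hv).2
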